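/- Let Z be a Zinbiel algebra, A an abelian subalgebra of Z of codimension two, and M a subalgebra of codimension one in Z containing A. Then [Z,A] ⊆ M and [A,Z] ⊆ M. -/
import Mathlib


variable {F : Type*} [Field F] {Z : Type*} [AddCommGroup Z] [Module F Z]

/-- `A` is a subalgebra of the algebra with multiplication `b`. -/
def IsSubalg (b : Z →ₗ[F] Z →ₗ[F] Z) (A : Submodule F Z) : Prop :=
  ∀ x ∈ A, ∀ y ∈ A, b x y ∈ A

/-- `A` is abelian: all products of elements of `A` vanish. -/
def IsAbelian (b : Z →ₗ[F] Z →ₗ[F] Z) (A : Submodule F Z) : Prop :=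
  ∀ x ∈ A, ∀ y ∈ A, b x y = 0

/-- let `Z` be a Zinbiel algebra, `A` an abelian subalgebra of codimension two
and `M` a subalgebra of codimension one with `A ⊆ M`. Then `[Z,A] ⊆ M` and `[A,Z] ⊆ M`. -/
theorem stmt6 [FiniteDimensional F Z] (b : Z →ₗ[F] Z →ₗ[F] Z)
    (hZinbiel : ∀ x y z : Z, b (b x y) z = b x (b y z) + b x (b z y))
    (A M : Submodule F Z) (hAM : A ≤ M)
    (hsubA : IsSubalg b A) (habA : IsAbelian b A) (hsubM : IsSubalg b M)
    (hdimA : Module.finrank F A + 2 = Module.finrank F Z)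
    (hdimM : Module.finrank F M + 1 = Module.finrank F Z) :
    ∀ z : Z, ∀ x ∈ A, b z x ∈ M ∧ b x z ∈ M := by
  -- Since `M` has codimension one, any `w ∉ M` spans a complement of `M`.
  have key : ∀ w : Z, w ∉ M → ∀ z : Z, ∃ m' ∈ M, ∃ c : F, z = m' + c • w := by
    intro w hw z
    have hlt : M < M ⊔ Submodule.span F {w} := by
      refine lt_of_le_of_ne le_sup_left ?_
      intro h
      exact hw (h ▸ Submodule.mem_sup_right (Submodule.mem_span_singleton_self w))
    have h1 : Module.finrank F M <
        Module.finrank F (M ⊔ Submodule.span F {w} : Submodule F Z) :=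
      Submodule.finrank_lt_finrank_of_lt hlt
    have h3 := Submodule.finrank_le (M ⊔ Submodule.span F {w})
    have h2 : (M ⊔ Submodule.span F {w} : Submodule F Z) = ⊤ :=
      Submodule.eq_top_of_finrank_eq (by omega)
    have hz : z ∈ M ⊔ Submodule.span F {w} := h2 ▸ Submodule.mem_top
    rcases Submodule.mem_sup.mp hz with ⟨m', hm', s, hs, rfl⟩
    rcases Submodule.mem_span_singleton.mp hs with ⟨c, rfl⟩
    exact ⟨m', hm', c, rfl⟩
  have claim1 : ∀ z : Z, ∀ x ∈ A, b z x ∈ M := by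
    intro z x hx
    by_contra hw
    obtain ⟨m', hm', c, hz⟩ := key (b z x) hw z
    apply hw
    have h0 : b (b z x) x = 0 := by
      rw [hZinbiel, habA x hx x hx]
      simp
    have : b z x = b m' x + c • b (b z x) x := by
      conv_lhs => rw [hz]
      simp [map_add, map_smul]
    rw [this, h0, smul_zero, add_zero]
    exact hsubM m' hm' x (hAM hx)
  have claim2 : ∀ x ∈ A, ∀ z : Z, b x z ∈ M := by
    intro x hx z
    by_contra hw
    obtain ⟨m', hm', c, hz⟩ := key (b x z) hw z
    apply hw
    have h0 : b x (b x z) = - b x (b z x) := by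
      have h := hZinbiel x x z
      rw [habA x hx x hx] at h
      simp only [map_zero, LinearMap.zero_apply] at h
      exact eq_neg_of_add_eq_zero_left h.symm
    have hmem : b x (b x z) ∈ M := by
      rw [h0]
      exact M.neg_mem (hsubM x (hAM hx) _ (claim1 z x hx))
    have : b x z = b x m' + c • b x (b x z) := by
      conv_lhs => rw [hz]
      simp [map_add, map_smul]
    rw [this]
    exact M.add_mem (hsubM x (hAM hx) m' hm') (M.smul_mem c hmem)
  intro z x hx
  exact ⟨claim1 z x hx, claim2 x hx z⟩
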